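/- arXiv:2511.11196 — 3 statements merged into one kernel-verified Lean document; each statement's English description precedes it below -/
import Mathlib

section
/- Kruskal's theorem for labelled trees (KT_ℓ(ω)): for every well quasi-order (Q, ≤_Q), the set T(Q) of finite rooted ordered trees with labels in Q, quasi-ordered by the embeddability relation ⪯, is a well quasi-order. -/
/-
Nash-Williams' minimal bad sequence argument. If some sequence of trees were bad, choose one,
`f`, that is lexicographically minimal in the sizes of its terms. The immediate subtrees of all
`f n` are then well quasi-ordered: a bad sequence of them, started at the subtree of `f N` with
`N` least, could be appended to `f 0, …, f (N - 1)` to give a bad sequence that is smaller at `N`.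
By Higman's lemma the lists of immediate subtrees are well quasi-ordered under sublist
embedding, so by Dickson's lemma some `i < j` have `f i` and `f j` related both in root label
and in children, whence `f i ⪯ f j`.
-/

/-- Finite rooted ordered trees (rose trees) with labels in `Q`. -/
inductive RoseTree (Q : Type) : Type
  | node : Q → List (RoseTree Q) → RoseTree Q

/-- The embeddability relation `⪯` on labelled trees: `t ⪯ node q ss` if `t`
embeds in some immediate subtree of `node q ss`, or the roots' labels are
related and the lists of immediate subtrees are related by a sublist-embedding. -/
inductive TreeEmb {Q : Type} (le : Q → Q → Prop) : RoseTree Q → RoseTree Q → Prop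
  | subtree {t : RoseTree Q} {q : Q} {ss : List (RoseTree Q)} {s : RoseTree Q} :
      s ∈ ss → TreeEmb le t s → TreeEmb le t (RoseTree.node q ss)
  | node {p q : Q} {ts ss : List (RoseTree Q)} :
      le p q → List.SublistForall₂ (TreeEmb le) ts ss →
      TreeEmb le (RoseTree.node p ts) (RoseTree.node q ss)

open Set Set.PartiallyWellOrderedOn

theorem List.SublistForall₂.exists_mem_right {α β : Type*} {r : α → β → Prop} {as : List α}
    {bs : List β} (h : SublistForall₂ r as bs) {a : α} (ha : a ∈ as) : ∃ b ∈ bs, r a b := by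
  induction h with
  | nil => simp at ha
  | @cons x y _ _ hxy _ ih =>
    rcases List.mem_cons.1 ha with rfl | ha
    · exact ⟨y, List.mem_cons_self, hxy⟩
    · obtain ⟨b, hb, hab⟩ := ih ha
      exact ⟨b, List.mem_cons_of_mem _ hb, hab⟩
  | cons_right _ ih =>
    obtain ⟨b, hb, hab⟩ := ih ha
    exact ⟨b, List.mem_cons_of_mem _ hb, hab⟩

theorem List.SublistForall₂.trans_of_forall_mem_right {α β γ : Type*} {r : α → β → Prop}
    {s : β → γ → Prop} {t : α → γ → Prop} {as : List α} {bs : List β} {cs : List γ}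
    (h₁ : SublistForall₂ r as bs) (h₂ : SublistForall₂ s bs cs)
    (h : ∀ c ∈ cs, ∀ a b, r a b → s b c → t a c) : SublistForall₂ t as cs := by
  induction h₂ generalizing as with
  | nil =>
    cases h₁
    exact .nil
  | @cons b c _ _ hbc _ ih =>
    have h' := fun c' hc' => h c' (List.mem_cons_of_mem c hc')
    cases h₁ with
    | nil => exact .nil
    | cons hab h₁ => exact .cons (h c List.mem_cons_self _ _ hab hbc) (ih h₁ h')
    | cons_right h₁ => exact .cons_right (ih h₁ h')
  | @cons_right c _ _ _ ih =>
    exact .cons_right (ih h₁ fun c' hc' => h c' (List.mem_cons_of_mem c hc'))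

namespace Set.PartiallyWellOrderedOn

theorem setOf_below_of_isMinBadSeq {α : Type*} {r : α → α → Prop} {rk : α → ℕ}
    {sub : α → α → Prop} (hrk : ∀ {a b}, sub a b → rk a < rk b)
    (hr : ∀ {a b c}, r a b → sub b c → r a c) {f : ℕ → α} (hbad : IsBadSeq r univ f)
    (hmin : ∀ n, IsMinBadSeq r rk univ n f) :
    {a | ∃ n, sub a (f n)}.PartiallyWellOrderedOn r := by
  rw [iff_forall_not_isBadSeq]
  rintro g ⟨hg, hgbad⟩
  choose m hm using hg
  set k₀ := Function.argmin m
  set N := m k₀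
  have hN : ∀ k, N ≤ m k := fun k => Function.argmin_le m k
  -- `f 0, …, f (N - 1), g k₀, g (k₀ + 1), …` is bad, yet smaller than `f` at `N`.
  refine hmin N (fun i => if i < N then f i else g (k₀ + (i - N))) (fun i hi => by simp [hi])
    (by simpa using hrk (hm k₀)) ⟨fun _ => trivial, fun i j hij hrij => ?_⟩
  by_cases hj : j < N
  · simp only [hj, hij.trans hj, if_true] at hrij
    exact hbad.2 i j hij hrij
  by_cases hi : i < N
  · simp only [hi, hj, if_true, if_false] at hrij
    exact hbad.2 i _ (hi.trans_le (hN _)) (hr hrij (hm _))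
  · simp only [hi, hj, if_false] at hrij
    exact hgbad _ _ (by omega) hrij

end Set.PartiallyWellOrderedOn

namespace RoseTree

variable {Q : Type}

def label : RoseTree Q → Q
  | node q _ => q

def children : RoseTree Q → List (RoseTree Q)
  | node _ ts => ts

theorem sizeOf_lt_of_mem_children {s t : RoseTree Q} (h : s ∈ t.children) :
    sizeOf s < sizeOf t := by
  obtain ⟨q, ts⟩ := t
  have := List.sizeOf_lt_of_mem (show s ∈ ts from h)
  simp only [node.sizeOf_spec]
  omega

end RoseTree

namespace TreeEmb

variable {Q : Type} {le : Q → Q → Prop}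

theorem refl [Std.Refl le] : ∀ t : RoseTree Q, TreeEmb le t t
  | .node q ts => node (_root_.refl q) (List.sublistForall₂_iff.2
      ⟨ts, List.forall₂_same.2 fun t _ => TreeEmb.refl t, List.Sublist.refl ts⟩)

theorem trans [IsTrans Q le] {a b : RoseTree Q} :
    ∀ {c : RoseTree Q}, TreeEmb le a b → TreeEmb le b c → TreeEmb le a c
  | .node _ _, hab, subtree hs hbs => subtree hs (TreeEmb.trans hab hbs)
  | .node _ _, subtree ht hat, node _ hsub =>
    have ⟨s, hs, hts⟩ := hsub.exists_mem_right ht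
    subtree hs (TreeEmb.trans hat hts)
  | .node _ _, node hpq hsub₁, node hqr hsub₂ =>
    node (_root_.trans hpq hqr)
      (hsub₁.trans_of_forall_mem_right hsub₂ fun _ _ _ _ h₁ h₂ => TreeEmb.trans h₁ h₂)

instance [IsPreorder Q le] : IsPreorder (RoseTree Q) (TreeEmb le) where
  refl := refl
  trans _ _ _ := trans

theorem of_mem_children {s t u : RoseTree Q} (hst : TreeEmb le s t) (htu : t ∈ u.children) :
    TreeEmb le s u := by
  cases u
  exact subtree htu hst

theorem of_label_children {s t : RoseTree Q} (hlabel : le s.label t.label)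
    (hchildren : List.SublistForall₂ (TreeEmb le) s.children t.children) : TreeEmb le s t := by
  cases s
  cases t
  exact node hlabel hchildren

theorem wellQuasiOrdered [IsPreorder Q le] (hle : WellQuasiOrdered le) :
    WellQuasiOrdered (TreeEmb le) := by
  rw [← partiallyWellOrderedOn_univ_iff, iff_not_exists_isMinBadSeq sizeOf]
  rintro ⟨f, hbad, hmin⟩
  have hchildren : {t | ∃ n, t ∈ (f n).children}.PartiallyWellOrderedOn (TreeEmb le) :=
    setOf_below_of_isMinBadSeq (sub := fun s t => s ∈ t.children)
      RoseTree.sizeOf_lt_of_mem_children of_mem_children hbad hmin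
  have hpairs := (partiallyWellOrderedOn_of_wellQuasiOrdered hle univ).prod
    (hchildren.partiallyWellOrderedOn_sublistForall₂ _)
  obtain ⟨i, j, hij, hlabel, hchildren⟩ :=
    hpairs.exists_lt (f := fun n => ((f n).label, (f n).children))
      fun n => ⟨trivial, fun t ht => ⟨n, ht⟩⟩
  exact hbad.2 i j hij (of_label_children hlabel hchildren)

end TreeEmb

/-- Kruskal's theorem for labelled trees, KT_ℓ(ω): if `(Q, le)` is a well
quasi-order, then the trees with labels in `Q` under embeddability form a
well quasi-order (every infinite sequence is good). -/
theorem kruskal_labelled {Q : Type} (le : Q → Q → Prop)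
    (hrefl : Reflexive le) (htrans : Transitive le)
    (hwqo : ∀ q : ℕ → Q, ∃ i j : ℕ, i < j ∧ le (q i) (q j)) :
    ∀ f : ℕ → RoseTree Q, ∃ i j : ℕ, i < j ∧ TreeEmb le (f i) (f j) := by
  have : IsPreorder Q le := { refl := hrefl, trans := fun _ _ _ h₁ h₂ => htrans h₁ h₂ }
  exact TreeEmb.wellQuasiOrdered hwqo
end

section
/- Boundedness of the bounding function F below a closed epsilon number: let γ : Ordinal → Ordinal, let F be the bounding function defined from γ, and let δ be an ordinal such that ω^δ = δ (an epsilon number) and γ(β) < δ for all β < δ. Then for every ordinal β < δ and every natural number c, F(β, c) < δ. -/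
open Ordinal

/-- The bounding function `F` defined from `γ`, with the recursion on the
*first* argument: `boundF γ α β = F(β, α)` where
`F(β, 0) = ω^(1+β)`, `F(β, α+1) = F(γ(ω^(F(β,α)+β+1)), α) + 1`, and
`F(β, λ) = sup_{α<λ} (F(β, α) + 1)` for `λ` a limit ordinal. -/
noncomputable def boundF (γ : Ordinal → Ordinal) (α : Ordinal) : Ordinal → Ordinal :=
  Ordinal.limitRecOn α
    (fun β => omega0 ^ (1 + β))
    (fun _ ih => fun β => ih (γ (omega0 ^ (ih β + β + 1))) + 1)
    (fun o _ ih => fun β => ⨆ x : Set.Iio o, (ih x.1 x.2 β + 1))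

theorem boundF_zero (γ : Ordinal → Ordinal) (β : Ordinal) :
    boundF γ 0 β = omega0 ^ (1 + β) := by
  simp [boundF, limitRecOn_zero]

theorem boundF_succ (γ : Ordinal → Ordinal) (α β : Ordinal) :
    boundF γ (α + 1) β = boundF γ α (γ (omega0 ^ (boundF γ α β + β + 1))) + 1 := by
  have : α + 1 = Order.succ α := rfl
  rw [boundF, this, limitRecOn_succ]
  rfl

/-- Boundedness of the bounding function `F` below a closed epsilon number:
if `δ` is an epsilon number (`ω^δ = δ`) closed under `γ`, then
`F(β, c) < δ` for every `β < δ` and every natural number `c`. -/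
theorem boundF_lt_of_closed (γ : Ordinal → Ordinal) {δ : Ordinal}
    (heps : omega0 ^ δ = δ) (hclosed : ∀ β < δ, γ β < δ) :
    ∀ β < δ, ∀ c : ℕ, boundF γ (c : Ordinal) β < δ := by
  have hδpos : 0 < δ := heps ▸ opow_pos δ omega0_pos
  have hωle : omega0 ≤ δ := heps ▸ left_le_opow omega0 hδpos
  have hone : (1 : Ordinal) < δ := one_lt_omega0.trans_le hωle
  have hω : omega0 < δ := by
    calc omega0 = omega0 ^ (1 : Ordinal) := (opow_one _).symm
    _ < omega0 ^ δ := (opow_lt_opow_iff_right one_lt_omega0).2 hone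
    _ = δ := heps
  have hadd : ∀ a < δ, ∀ b < δ, a + b < δ := by
    intro a ha b hb
    rw [← heps] at ha hb ⊢
    exact principal_add_omega0_opow δ ha hb
  have hpow : ∀ a < δ, omega0 ^ a < δ := by
    intro a ha
    rw [← heps]
    exact (opow_lt_opow_iff_right one_lt_omega0).2 ha
  have key : ∀ c : ℕ, ∀ β < δ, boundF γ (c : Ordinal) β < δ := by
    intro c
    induction c with
    | zero =>
      intro β hβ
      rw [Nat.cast_zero, boundF_zero]
      exact hpow _ (hadd 1 hone β hβ)
    | succ n ih =>
      intro β hβ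
      rw [Nat.cast_succ, boundF_succ]
      have h1 : boundF γ (n : Ordinal) β < δ := ih β hβ
      have h2 : omega0 ^ (boundF γ (n : Ordinal) β + β + 1) < δ :=
        hpow _ (hadd _ (hadd _ h1 _ hβ) 1 hone)
      have h3 := ih _ (hclosed _ h2)
      exact hadd _ h3 1 hone
  exact fun β hβ c => key c β hβ
end

section
/- Ramsey extraction of bad coordinate subsequences: let (Q, ≤_Q) be a quasi-order, let n ≥ 1, and let f : ℕ → (Fin n → Q) be an infinite sequence that is bad for the pointwise (product) order on Fin n → Q, i.e., for all i < j there exists k with ¬(f i k ≤_Q f j k). Then there exist a coordinate k : Fin n and an infinite set H ⊆ ℕ such that the coordinate sequence i ↦ f i k is bad along H: for all i, j ∈ H with i < j, ¬(f i k ≤_Q f j k). -/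
private lemma ramsey_bad_aux {Q : Type*} (le : Q → Q → Prop)
    (hrefl : Reflexive le) (htrans : Transitive le) :
    ∀ (n : ℕ) (f : ℕ → Fin (n + 1) → Q),
      (∀ i j : ℕ, i < j → ∃ k, ¬ le (f i k) (f j k)) →
      ∃ (k : Fin (n + 1)) (g : ℕ ↪o ℕ),
        ∀ i j : ℕ, i < j → ¬ le (f (g i) k) (f (g j) k) := by
  intro n
  induction n with
  | zero =>
    intro f hbad
    haveI : IsTrans Q le := ⟨htrans⟩
    obtain ⟨g, hg | hg⟩ := exists_increasing_or_nonincreasing_subseq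
      le (fun i => f i 0)
    · exfalso
      obtain ⟨k, hk⟩ := hbad (g 0) (g 1) (g.strictMono Nat.zero_lt_one)
      have : k = 0 := Fin.fin_one_eq_zero k
      exact hk (this ▸ hg 0 1 Nat.zero_lt_one)
    · exact ⟨0, g, hg⟩
  | succ m ih =>
    intro f hbad
    haveI : IsTrans Q le := ⟨htrans⟩
    obtain ⟨g, hg | hg⟩ := exists_increasing_or_nonincreasing_subseq
      le (fun i => f i 0)
    · -- coordinate 0 is good along g; recurse on remaining coordinates
      set f' : ℕ → Fin (m + 1) → Q := fun i k => f (g i) k.succ with hf'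
      have hbad' : ∀ i j : ℕ, i < j → ∃ k, ¬ le (f' i k) (f' j k) := by
        intro i j hij
        obtain ⟨k, hk⟩ := hbad (g i) (g j) (g.strictMono hij)
        rcases Fin.eq_zero_or_eq_succ k with rfl | ⟨k', rfl⟩
        · exact absurd (hg i j hij) hk
        · exact ⟨k', hk⟩
      obtain ⟨k, g', hk⟩ := ih f' hbad'
      exact ⟨k.succ, g'.trans g, fun i j hij => hk i j hij⟩
    · exact ⟨0, g, hg⟩

/-- Ramsey extraction of bad coordinate subsequences: if `(Q, le)` is a
quasi-order, `n ≥ 1`, and `f : ℕ → (Fin n → Q)` is bad for the pointwise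
order, then some coordinate `k` admits an infinite set `H ⊆ ℕ` along which
the coordinate sequence `i ↦ f i k` is bad. -/
theorem ramsey_bad_coordinate {Q : Type*} (le : Q → Q → Prop)
    (hrefl : Reflexive le) (htrans : Transitive le)
    {n : ℕ} (hn : 1 ≤ n) (f : ℕ → (Fin n → Q))
    (hbad : ∀ i j : ℕ, i < j → ∃ k : Fin n, ¬ le (f i k) (f j k)) :
    ∃ (k : Fin n) (H : Set ℕ), H.Infinite ∧
      ∀ i ∈ H, ∀ j ∈ H, i < j → ¬ le (f i k) (f j k) := by
  obtain ⟨m, hm⟩ := Nat.exists_eq_add_of_le hn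
  rw [Nat.add_comm] at hm
  subst hm
  obtain ⟨k, g, hk⟩ := ramsey_bad_aux le hrefl htrans m f hbad
  refine ⟨k, Set.range g, Set.infinite_range_of_injective g.injective, ?_⟩
  rintro _ ⟨i, rfl⟩ _ ⟨j, rfl⟩ hij
  exact hk i j (g.lt_iff_lt.mp hij)
end
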